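/- arXiv:2509.22907 — 3 statements merged into one kernel-verified Lean document; each statement's English description precedes it below -/
import Mathlib

section
/- Let (Ω, ℱ, P) be a probability space, n a natural number, and X : Fin (n+1) → Ω → ℝ a family of measurable random variables that is exchangeable: for every permutation σ of Fin (n+1), the pushforward of P under ω ↦ (i ↦ X_{σ(i)}(ω)) equals the pushforward of P under ω ↦ (i ↦ X_i(ω)) as measures on Fin (n+1) → ℝ. Fix λ ∈ ℝ and a multiset M of real numbers with card M = n+1, and let E_M := {ω ∈ Ω : the multiset {X_0(ω), …, X_n(ω)} equals M}. Then for every index j ∈ Fin (n+1), P({ω : X_j(ω) ≤ λ} ∩ E_M) = (card{m ∈ M : m ≤ λ} / (n+1)) · P(E_M). -/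
open MeasureTheory
open scoped ENNReal

/-- Core exchangeability fact underlying Lemma 1 of FedCF: conditional on the observed
bag (multiset) `M` of the `n+1` scores, each fixed variable is at or below `λ` with
probability equal to the fraction of bag elements at or below `λ`. -/
theorem exchangeable_conditional_rank {Ω : Type*} [MeasurableSpace Ω]
    (P : Measure Ω) [IsProbabilityMeasure P]
    (n : ℕ) (X : Fin (n + 1) → Ω → ℝ) (hX : ∀ i, Measurable (X i))
    (hexch : ∀ σ : Equiv.Perm (Fin (n + 1)),
      Measure.map (fun ω => fun i => X (σ i) ω) P = Measure.map (fun ω => fun i => X i ω) P)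
    (lam : ℝ) (M : Multiset ℝ) (hM : Multiset.card M = n + 1)
    (j : Fin (n + 1)) :
    P ({ω | X j ω ≤ lam} ∩ {ω | Multiset.map (fun i => X i ω) Finset.univ.val = M})
      = ((Multiset.card (M.filter (fun x => x ≤ lam)) : ℝ≥0∞) / ((n : ℝ≥0∞) + 1))
        * P {ω | Multiset.map (fun i => X i ω) Finset.univ.val = M} := by
  set k : ℕ := Multiset.card (M.filter (fun x => x ≤ lam)) with hk
  set E : Set Ω := {ω | Multiset.map (fun i => X i ω) Finset.univ.val = M} with hE
  set A : Fin (n+1) → Set Ω := fun i => {ω | X i ω ≤ lam} ∩ E with hA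
  set T : Ω → (Fin (n+1) → ℝ) := fun ω i => X i ω with hT
  have hTmeas : Measurable T := measurable_pi_lambda _ hX
  -- the set of tuples with value multiset M is finite, hence measurable
  set Sms : Set (Fin (n+1) → ℝ) := {f | Multiset.map f Finset.univ.val = M} with hSms
  have hfin : Sms.Finite := by
    apply Set.Finite.subset (Set.Finite.pi (fun _ : Fin (n+1) => (M.toFinset : Set ℝ).toFinite))
    intro f hf i _
    simp only [Finset.coe_sort_coe, Multiset.mem_toFinset, Finset.mem_coe]
    rw [← hf]
    exact Multiset.mem_map_of_mem f (Finset.mem_univ i)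
  have hSmsMeas : MeasurableSet Sms := hfin.measurableSet
  have hEmeas : MeasurableSet E := hTmeas hSmsMeas
  have hAmeas : ∀ i, MeasurableSet (A i) := fun i =>
    ((hX i) measurableSet_Iic).inter hEmeas
  -- multiset invariance under permutation
  have hmsinv : ∀ (σ : Equiv.Perm (Fin (n+1))) (f : Fin (n+1) → ℝ),
      Multiset.map (fun i => f (σ i)) Finset.univ.val = Multiset.map f Finset.univ.val := by
    intro σ f
    have h1 : Multiset.map (⇑σ) Finset.univ.val = Finset.univ.val := by
      have := Finset.map_univ_equiv σ
      calc Multiset.map (⇑σ) Finset.univ.val = (Finset.univ.map σ.toEmbedding).val := by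
            rw [Finset.map_val]; rfl
        _ = Finset.univ.val := by rw [this]
    calc Multiset.map (fun i => f (σ i)) Finset.univ.val
        = Multiset.map f (Multiset.map (⇑σ) Finset.univ.val) := by
          rw [Multiset.map_map]; rfl
      _ = Multiset.map f Finset.univ.val := by rw [h1]
  -- P (A i) = P (A j) for all i
  have key : ∀ i, P (A i) = P (A j) := by
    intro i
    have hσ := hexch (Equiv.swap i j)
    set S : Set (Fin (n+1) → ℝ) := {f | f j ≤ lam} ∩ Sms with hS
    have hSmeas : MeasurableSet S :=
      ((measurable_pi_apply j) measurableSet_Iic).inter hSmsMeas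
    have hσmeas : Measurable (fun ω => fun i' => X (Equiv.swap i j i') ω) :=
      measurable_pi_lambda _ (fun i' => hX _)
    have h1 := congrArg (fun μ : Measure (Fin (n+1) → ℝ) => μ S) hσ
    rw [Measure.map_apply hσmeas hSmeas, Measure.map_apply hTmeas hSmeas] at h1
    have hL : (fun ω => fun i' => X (Equiv.swap i j i') ω) ⁻¹' S = A i := by
      ext ω
      simp only [hS, hSms, Set.mem_preimage, Set.mem_inter_iff, Set.mem_setOf_eq, hA, hE]
      rw [Equiv.swap_apply_right, hmsinv (Equiv.swap i j) (fun i' => X i' ω)]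
    have hR : T ⁻¹' S = A j := by
      ext ω
      simp only [hS, hSms, Set.mem_preimage, Set.mem_inter_iff, Set.mem_setOf_eq, hA, hE, hT]
    rw [hL, hR] at h1
    exact h1
  -- pointwise counting identity
  have hpoint : ∀ ω, ∑ i, (A i).indicator (1 : Ω → ℝ≥0∞) ω
      = (k : ℝ≥0∞) * E.indicator 1 ω := by
    intro ω
    by_cases hω : ω ∈ E
    · have hcount : (Finset.univ.filter (fun i => X i ω ≤ lam)).card = k := by
        have hωE : Multiset.map (fun i => X i ω) Finset.univ.val = M := hω
        rw [hk, ← hωE, Multiset.filter_map, Multiset.card_map, Finset.card_def,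
          Finset.filter_val]
        congr 1
      have : ∀ i, (A i).indicator (1 : Ω → ℝ≥0∞) ω
          = if X i ω ≤ lam then 1 else 0 := by
        intro i
        rw [Set.indicator_apply]
        by_cases h : X i ω ≤ lam
        · simp [hA, h, hω]
        · simp [hA, h]
      rw [Finset.sum_congr rfl (fun i _ => this i)]
      rw [Finset.sum_boole]
      rw [Set.indicator_of_mem hω]
      simp [hcount]
    · have : ∀ i, (A i).indicator (1 : Ω → ℝ≥0∞) ω = 0 := by
        intro i
        apply Set.indicator_of_notMem
        intro h
        exact hω h.2
      rw [Finset.sum_congr rfl (fun i _ => this i), Set.indicator_of_notMem hω]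
      simp
  -- sum identity
  have hsum : ∑ i, P (A i) = (k : ℝ≥0∞) * P E := by
    have h1 : ∀ i, P (A i) = ∫⁻ ω, (A i).indicator 1 ω ∂P := by
      intro i; rw [lintegral_indicator_one (hAmeas i)]
    rw [Finset.sum_congr rfl (fun i _ => h1 i)]
    rw [← lintegral_finset_sum _ (fun i _ => (measurable_one.indicator (hAmeas i)))]
    simp_rw [hpoint]
    rw [lintegral_const_mul _ (measurable_one.indicator hEmeas), lintegral_indicator_one hEmeas]
  have hconst : ∑ i, P (A i) = ((n : ℝ≥0∞) + 1) * P (A j) := by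
    rw [Finset.sum_congr rfl (fun i _ => key i), Finset.sum_const, Finset.card_univ,
      Fintype.card_fin, nsmul_eq_mul]
    norm_cast
  have hmain : ((n : ℝ≥0∞) + 1) * P (A j) = (k : ℝ≥0∞) * P E := by
    rw [← hconst, hsum]
  have hne0 : ((n : ℝ≥0∞) + 1) ≠ 0 := by simp
  have hnetop : ((n : ℝ≥0∞) + 1) ≠ ⊤ := by
    simp [ENNReal.add_ne_top, ENNReal.natCast_ne_top]
  calc P (A j) = (((n : ℝ≥0∞) + 1)⁻¹ * ((n : ℝ≥0∞) + 1)) * P (A j) := by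
        rw [ENNReal.inv_mul_cancel hne0 hnetop, one_mul]
    _ = ((n : ℝ≥0∞) + 1)⁻¹ * ((k : ℝ≥0∞) * P E) := by rw [mul_assoc, hmain]
    _ = (k : ℝ≥0∞) / ((n : ℝ≥0∞) + 1) * P E := by
        rw [div_eq_mul_inv, ← mul_assoc, mul_comm (((n : ℝ≥0∞) + 1)⁻¹) ((k : ℝ≥0∞))]
end

section
/- Let (Ω, ℱ, P) be a probability space, n a natural number, and Z : Fin (n+1) → Ω → ℝ × Bool a family of measurable random variables that is exchangeable: for every permutation σ of Fin (n+1), the pushforward of P under ω ↦ (i ↦ Z_{σ(i)}(ω)) equals the pushforward of P under ω ↦ (i ↦ Z_i(ω)) as measures on Fin (n+1) → ℝ × Bool. Fix λ ∈ ℝ and a multiset B over ℝ × Bool with card B = n+1, and let E_B := {ω ∈ Ω : the multiset {Z_0(ω), …, Z_n(ω)} equals B}. Then for every index j ∈ Fin (n+1), P({ω : (Z_j(ω)).1 ≤ λ and (Z_j(ω)).2 = true} ∩ E_B) = (card{(s, f) ∈ B : s ≤ λ and f = true} / (n+1)) · P(E_B). -/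
open MeasureTheory
open scoped ENNReal

/-- Core exchangeability fact underlying Lemma 4 of FedCF: for exchangeable
score–indicator pairs, conditional on the observed bag `B`, any fixed index satisfies
both the threshold and filter conditions with probability equal to the fraction of bag
elements satisfying both. -/
theorem exchangeable_joint_conditional {Ω : Type*} [MeasurableSpace Ω]
    (P : Measure Ω) [IsProbabilityMeasure P]
    (n : ℕ) (Z : Fin (n + 1) → Ω → ℝ × Bool) (hZ : ∀ i, Measurable (Z i))
    (hexch : ∀ σ : Equiv.Perm (Fin (n + 1)),
      Measure.map (fun ω => fun i => Z (σ i) ω) P = Measure.map (fun ω => fun i => Z i ω) P)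
    (lam : ℝ) (B : Multiset (ℝ × Bool)) (hB : Multiset.card B = n + 1)
    (j : Fin (n + 1)) :
    P ({ω | (Z j ω).1 ≤ lam ∧ (Z j ω).2 = true}
        ∩ {ω | Multiset.map (fun i => Z i ω) Finset.univ.val = B})
      = ((Multiset.card (B.filter (fun z => z.1 ≤ lam ∧ z.2 = true)) : ℝ≥0∞)
          / ((n : ℝ≥0∞) + 1))
        * P {ω | Multiset.map (fun i => Z i ω) Finset.univ.val = B} := by
  classical
  set cond : ℝ × Bool → Prop := fun z => z.1 ≤ lam ∧ z.2 = true with hcond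
  set k : ℕ := Multiset.card (B.filter cond) with hk
  set φ : Ω → (Fin (n+1) → ℝ × Bool) := fun ω => fun i => Z i ω with hφdef
  have hφ : Measurable φ := measurable_pi_lambda _ hZ
  -- the bag event in the function space
  set T : Set (Fin (n+1) → ℝ × Bool) := {f | Multiset.map f Finset.univ.val = B} with hTdef
  have hTfin : T.Finite := by
    apply Set.Finite.subset (Set.Finite.pi (fun i : Fin (n+1) => B.toFinset.finite_toSet))
    intro f hf
    intro i _
    have : f i ∈ Multiset.map f Finset.univ.val :=
      Multiset.mem_map_of_mem f (Finset.mem_univ i)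
    rw [hf] at this
    simpa using this
  have hTmeas : MeasurableSet T := hTfin.measurableSet
  have hcondmeas : MeasurableSet {z : ℝ × Bool | cond z} := by
    have h1 : MeasurableSet {z : ℝ × Bool | z.1 ≤ lam} :=
      measurableSet_le measurable_fst measurable_const
    have h2 : MeasurableSet {z : ℝ × Bool | z.2 = true} :=
      measurable_snd (measurableSet_singleton true)
    exact h1.inter h2
  set S : Fin (n+1) → Set (Fin (n+1) → ℝ × Bool) := fun i => {f | cond (f i)} ∩ T with hSdef
  have hSmeas : ∀ i, MeasurableSet (S i) := by
    intro i
    have h : S i = (fun f : Fin (n+1) → ℝ × Bool => f i) ⁻¹' {z | cond z} ∩ T := rfl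
    rw [h]
    exact ((measurable_pi_apply i) hcondmeas).inter hTmeas
  -- bag is permutation invariant
  have bag_perm : ∀ (σ : Equiv.Perm (Fin (n+1))) (ω : Ω),
      Multiset.map (fun i => Z (σ i) ω) Finset.univ.val
        = Multiset.map (fun i => Z i ω) Finset.univ.val := by
    intro σ ω
    have h1 : Multiset.map (⇑σ) Finset.univ.val = Finset.univ.val := by
      have := congrArg Finset.val (Finset.map_univ_equiv σ)
      simpa [Finset.map_val] using this
    calc Multiset.map (fun i => Z (σ i) ω) Finset.univ.val
        = Multiset.map ((fun i => Z i ω) ∘ ⇑σ) Finset.univ.val := rfl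
      _ = Multiset.map (fun i => Z i ω) (Multiset.map (⇑σ) Finset.univ.val) :=
          (Multiset.map_map _ _ _).symm
      _ = Multiset.map (fun i => Z i ω) Finset.univ.val := by rw [h1]
  -- all indices have the same probability
  have same : ∀ j' : Fin (n+1), P (φ ⁻¹' S j') = P (φ ⁻¹' S j) := by
    intro j'
    set σ : Equiv.Perm (Fin (n+1)) := Equiv.swap j j' with hσ
    have hφσ : Measurable (fun ω => fun i => Z (σ i) ω) :=
      measurable_pi_lambda _ (fun i => hZ (σ i))
    have hmap := hexch σ
    have h1 : Measure.map (fun ω => fun i => Z (σ i) ω) P (S j)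
        = Measure.map φ P (S j) := by rw [hmap]
    rw [Measure.map_apply hφσ (hSmeas j), Measure.map_apply hφ (hSmeas j)] at h1
    have hpre : (fun ω => fun i => Z (σ i) ω) ⁻¹' S j = φ ⁻¹' S j' := by
      ext ω
      simp only [hSdef, hTdef, Set.mem_preimage, Set.mem_inter_iff, Set.mem_setOf_eq, hφdef]
      constructor
      · rintro ⟨h1, h2⟩
        rw [bag_perm σ ω] at h2
        have : σ j = j' := Equiv.swap_apply_left j j'
        rw [this] at h1
        exact ⟨h1, h2⟩
      · rintro ⟨h1, h2⟩
        refine ⟨?_, by rw [bag_perm σ ω]; exact h2⟩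
        have : σ j = j' := Equiv.swap_apply_left j j'
        rw [this]
        exact h1
    rw [hpre] at h1
    exact h1
  -- key counting identity
  have hEmeas : MeasurableSet {ω | Multiset.map (fun i => Z i ω) Finset.univ.val = B} :=
    hφ hTmeas
  set E : Set Ω := {ω | Multiset.map (fun i => Z i ω) Finset.univ.val = B} with hEdef
  have hAE : ∀ i, φ ⁻¹' S i = {ω | cond (Z i ω)} ∩ E := by
    intro i; rfl
  have hsum : ∑ j' : Fin (n+1), P (φ ⁻¹' S j') = (k : ℝ≥0∞) * P E := by
    have h1 : ∀ j', P (φ ⁻¹' S j')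
        = ∫⁻ ω, (φ ⁻¹' S j').indicator (fun _ => (1 : ℝ≥0∞)) ω ∂P := by
      intro j'
      rw [lintegral_indicator_const (hφ (hSmeas j'))]
      simp
    simp_rw [h1]
    rw [← lintegral_finset_sum _ (fun j' _ =>
      ((measurable_const (a := (1:ℝ≥0∞))).indicator (hφ (hSmeas j'))))]
    have hpt : ∀ ω, (∑ j' : Fin (n+1), (φ ⁻¹' S j').indicator (fun _ => (1 : ℝ≥0∞)) ω)
        = E.indicator (fun _ => (k : ℝ≥0∞)) ω := by
      intro ω
      by_cases hω : ω ∈ E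
      · have : ∀ j', (φ ⁻¹' S j').indicator (fun _ => (1 : ℝ≥0∞)) ω
            = if cond (Z j' ω) then 1 else 0 := by
          intro j'
          rw [hAE j']
          by_cases h : cond (Z j' ω)
          · have hm : ω ∈ {ω | cond (Z j' ω)} ∩ E := ⟨h, hω⟩
            rw [Set.indicator_of_mem hm, if_pos h]
          · have hm : ω ∉ {ω | cond (Z j' ω)} ∩ E := fun hc => h hc.1
            rw [Set.indicator_of_notMem hm, if_neg h]
        simp_rw [this]
        rw [Set.indicator_of_mem hω]
        rw [Finset.sum_boole]
        congr 1
        have hω' : Multiset.map (fun i => Z i ω) Finset.univ.val = B := hω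
        have : (Finset.filter (fun j' => cond (Z j' ω)) Finset.univ).card
            = Multiset.card (Multiset.filter cond B) := by
          rw [← hω', Multiset.filter_map]
          rw [Multiset.card_map]
          rfl
        rw [this]
      · have : ∀ j', (φ ⁻¹' S j').indicator (fun _ => (1 : ℝ≥0∞)) ω = 0 := by
          intro j'
          apply Set.indicator_of_notMem
          rw [hAE j']
          exact fun h => hω h.2
        simp_rw [this]
        rw [Set.indicator_of_notMem hω]
        simp
    simp_rw [hpt]
    rw [lintegral_indicator_const hEmeas]
  -- combine
  have hsum' : ∑ j' : Fin (n+1), P (φ ⁻¹' S j') = ((n : ℝ≥0∞) + 1) * P (φ ⁻¹' S j) := by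
    rw [Finset.sum_congr rfl (fun j' _ => same j'), Finset.sum_const, Finset.card_univ,
      Fintype.card_fin, nsmul_eq_mul]
    push_cast
    ring
  have main : ((n : ℝ≥0∞) + 1) * P (φ ⁻¹' S j) = (k : ℝ≥0∞) * P E := by
    rw [← hsum', hsum]
  have hne0 : ((n : ℝ≥0∞) + 1) ≠ 0 := by simp
  have hnetop : ((n : ℝ≥0∞) + 1) ≠ ⊤ := by
    simp [ENNReal.add_ne_top]
  have hgoal : P (φ ⁻¹' S j) = ((k : ℝ≥0∞) / ((n : ℝ≥0∞) + 1)) * P E := by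
    have h := (ENNReal.eq_div_iff hne0 hnetop).mpr main
    rw [h, div_eq_mul_inv, div_eq_mul_inv]
    ring
  exact hgoal
end

section
/- Let n ≥ 1 be a natural number and L, U > 0 be real numbers. For natural numbers a, b, m define h(a, b, m) := (a+1)/((n+1)·L) − (b·m)/((m+1)·(n+1)·U). Let a, a', b, b', m, m' be natural numbers with b ≤ m ≤ n, b' ≤ m' ≤ n, and |a − a'| ≤ 1, |b − b'| ≤ 1, |m − m'| ≤ 1 (differences taken in the integers). Then |h(a, b, m) − h(a', b', m')| ≤ (1/n)·(1/L + 1/U). -/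
/-! The count `b` of filtered points among the `m` points of a group enters the summand only
through `b * m / (m + 1)`. This quantity is monotone in both arguments, and for `b ≤ m` raising
both counts by one increases it by `(b + (m + 1)²) / ((m + 1) (m + 2)) ≤ 1`; so neighbouring
datasets move it by at most `1`, and the summand by at most `1/((n+1)L) + 1/((n+1)U)`. -/

namespace FedCF

noncomputable def dampedCount (b m : ℝ) : ℝ := b * m / (m + 1)

theorem dampedCount_mono {b b₁ m m₁ : ℝ} (hb : 0 ≤ b) (hbb₁ : b ≤ b₁) (hm : 0 ≤ m)
    (hmm₁ : m ≤ m₁) : dampedCount b m ≤ dampedCount b₁ m₁ := by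
  unfold dampedCount
  rw [div_le_div_iff₀ (by linarith) (by linarith)]
  nlinarith [mul_nonneg (mul_nonneg (sub_nonneg.2 hbb₁) (hm.trans hmm₁)) (by linarith : 0 ≤ m + 1),
    mul_nonneg hb (sub_nonneg.2 hmm₁)]

theorem dampedCount_succ_le {b m : ℝ} (hb : 0 ≤ b) (hbm : b ≤ m) :
    dampedCount (b + 1) (m + 1) ≤ dampedCount b m + 1 := by
  unfold dampedCount
  rw [div_add_one (by linarith), div_le_div_iff₀ (by linarith) (by linarith)]
  nlinarith

theorem dampedCount_le_add_one {b b' m m' : ℝ} (hb : 0 ≤ b) (hbm : b ≤ m) (hb' : 0 ≤ b')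
    (hbm' : b' ≤ m') (hbb' : b ≤ b' + 1) (hmm' : m ≤ m' + 1) :
    dampedCount b m ≤ dampedCount b' m' + 1 :=
  (dampedCount_mono hb hbb' (hb.trans hbm) hmm').trans (dampedCount_succ_le hb' hbm')

theorem abs_dampedCount_sub_le_one {b b' m m' : ℝ} (hb : 0 ≤ b) (hbm : b ≤ m) (hb' : 0 ≤ b')
    (hbm' : b' ≤ m') (hbb' : |b - b'| ≤ 1) (hmm' : |m - m'| ≤ 1) :
    |dampedCount b m - dampedCount b' m'| ≤ 1 := by
  rw [abs_le] at hbb' hmm'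
  rw [abs_sub_le_iff]
  constructor
  · linarith [dampedCount_le_add_one hb hbm hb' hbm' (by linarith) (by linarith)]
  · linarith [dampedCount_le_add_one hb' hbm' hb hbm (by linarith) (by linarith)]

end FedCF

open FedCF in
theorem fedcf_sensitivity_bound_general (n : ℕ) (hn : 1 ≤ n) (L U : ℝ)
    (hL : 0 < L) (hU : 0 < U)
    (h : ℕ → ℕ → ℕ → ℝ)
    (hdef : ∀ a b m : ℕ, h a b m
        = ((a : ℝ) + 1) / (((n : ℝ) + 1) * L)
          - ((b : ℝ) * (m : ℝ)) / (((m : ℝ) + 1) * ((n : ℝ) + 1) * U))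
    (a a' b b' m m' : ℕ)
    (hbm : b ≤ m) (hbm' : b' ≤ m')
    (ha : |(a : ℤ) - (a' : ℤ)| ≤ 1)
    (hb : |(b : ℤ) - (b' : ℤ)| ≤ 1)
    (hmm : |(m : ℤ) - (m' : ℤ)| ≤ 1) :
    |h a b m - h a' b' m'| ≤ (1 / (n : ℝ)) * (1 / L + 1 / U) := by
  have hnpos : (0 : ℝ) < n := by exact_mod_cast hn
  have haR : |(a : ℝ) - a'| ≤ 1 := by exact_mod_cast ha
  have hgap := abs_dampedCount_sub_le_one (Nat.cast_nonneg b) (Nat.cast_le.2 hbm)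
    (Nat.cast_nonneg b') (Nat.cast_le.2 hbm') (by exact_mod_cast hb) (by exact_mod_cast hmm)
  have hsplit : h a b m - h a' b' m' = ((a : ℝ) - a') / ((n + 1) * L)
      - (dampedCount b m - dampedCount b' m') / ((n + 1) * U) := by
    rw [hdef, hdef]
    unfold dampedCount
    field_simp
    ring
  have hLn : (0 : ℝ) < (n + 1) * L := by positivity
  have hUn : (0 : ℝ) < (n + 1) * U := by positivity
  calc |h a b m - h a' b' m'|
      ≤ |((a : ℝ) - a') / ((n + 1) * L)| + |(dampedCount b m - dampedCount b' m') / ((n + 1) * U)| :=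
        hsplit ▸ abs_sub _ _
    _ ≤ 1 / ((n + 1) * L) + 1 / ((n + 1) * U) := by
        rw [abs_div, abs_div, abs_of_pos hLn, abs_of_pos hUn]
        gcongr
    _ ≤ 1 / (n * L) + 1 / (n * U) := by gcongr <;> linarith
    _ = (1 / (n : ℝ)) * (1 / L + 1 / U) := by field_simp

/-- Sensitivity bound for the per-client summand of the enhanced-privacy coverage-gap
protocol in FedCF: changing one data point (so each of `a`, `b`, `m` changes by at
most 1) changes the transmitted quantity `h` by at most `(1/n)·(1/L + 1/U)`. -/
theorem fedcf_sensitivity_bound (n : ℕ) (hn : 1 ≤ n) (L U : ℝ)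
    (hL : 0 < L) (hU : 0 < U)
    (h : ℕ → ℕ → ℕ → ℝ)
    (hdef : ∀ a b m : ℕ, h a b m
        = ((a : ℝ) + 1) / (((n : ℝ) + 1) * L)
          - ((b : ℝ) * (m : ℝ)) / (((m : ℝ) + 1) * ((n : ℝ) + 1) * U))
    (a a' b b' m m' : ℕ)
    (hbm : b ≤ m) (hmn : m ≤ n) (hbm' : b' ≤ m') (hmn' : m' ≤ n)
    (ha : |(a : ℤ) - (a' : ℤ)| ≤ 1)
    (hb : |(b : ℤ) - (b' : ℤ)| ≤ 1)
    (hmm : |(m : ℤ) - (m' : ℤ)| ≤ 1) :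
    |h a b m - h a' b' m'| ≤ (1 / (n : ℝ)) * (1 / L + 1 / U) :=
  fedcf_sensitivity_bound_general n hn L U hL hU h hdef a a' b b' m m' hbm hbm' ha hb hmm
end
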